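/- Let N ≥ 2, 0 ≤ β < N, r > 0, and let m, β_0 > 0 satisfy β_0 > (N-β)^N/(α_0^{N-1} r^{N-β}) · e^{(N-β) m (N-2)!/N^N · r^N} for some α_0 > 0. Suppose a sequence t_n > 0 satisfies t_n^N ≥ c_0 (r/n)^{N-β} exp(α_0 ω_{N-1}^{-1/(N-1)} t_n^{N/(N-1)} (log n - m (N-2)!/N^N · r^N + o(1))) for a constant c_0 > 0 and t_n^N ≥ ((N-β)/N · α_N/α_0)^{N-1} with α_N = N ω_{N-1}^{1/(N-1)}. Then (t_n) is bounded and t_n^N → ((N-β)/N · α_N/α_0)^{N-1} as n → ∞. -/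

import Mathlib

/-!
Put `x n = t n ^ (N/(N-1))`, so that `x n ^ (N-1) = t n ^ N`, and write `A` for the coefficient
in the exponent and `B` for the lower bound on `x n`, so that `A * B = N - β`. Taking logarithms
in the lower bound and using `log x ≤ x` gives
`x n * (A * log n - M) ≤ A * B * log n - K` for large `n`, with constants `M` and `K`.
Dividing by `log n → ∞` squeezes `x n` between `B` and a quantity tending to `B`.
-/

open Filter Topology

lemma tendsto_of_ge_of_mul_sub_le {α : Type*} {l : Filter α} {x L : α → ℝ} {a b M K : ℝ}
    (ha : 0 < a) (hL : Tendsto L l atTop) (hge : ∀ᶠ i in l, b ≤ x i)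
    (hle : ∀ᶠ i in l, x i * (a * L i - M) ≤ a * b * L i - K) :
    Tendsto x l (𝓝 b) := by
  have hinv : Tendsto (fun i => (L i)⁻¹) l (𝓝 0) := tendsto_inv_atTop_zero.comp hL
  have hbound : Tendsto (fun i => (a * b - K * (L i)⁻¹) / (a - M * (L i)⁻¹)) l (𝓝 b) := by
    have h : Tendsto (fun i => (a * b - K * (L i)⁻¹) / (a - M * (L i)⁻¹)) l
        (𝓝 ((a * b - K * 0) / (a - M * 0))) :=
      (tendsto_const_nhds.sub (hinv.const_mul K)).div
        (tendsto_const_nhds.sub (hinv.const_mul M)) (by simpa using ha.ne')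
    simpa [ha.ne'] using h
  refine tendsto_of_tendsto_of_tendsto_of_le_of_le' tendsto_const_nhds hbound hge ?_
  filter_upwards [hle, hL.eventually_gt_atTop 0, hL.eventually_gt_atTop (M / a)]
    with i hi hLpos hLM
  have hden : 0 < a * L i - M := by rw [div_lt_iff₀ ha] at hLM; linarith
  have hrw : (a * b - K * (L i)⁻¹) / (a - M * (L i)⁻¹) =
      (a * b * L i - K) / (a * L i - M) := by
    field_simp
  rw [hrw, le_div_iff₀ hden]
  exact hi

lemma tendsto_of_ge_of_mul_log_le {x e : ℕ → ℝ} {A B C K D : ℝ} (hA : 0 < A) (hD : 0 ≤ D)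
    (he : Tendsto e atTop (𝓝 0)) (hx : ∀ᶠ n in atTop, 0 < x n)
    (hxB : ∀ᶠ n in atTop, B ≤ x n)
    (hlog : ∀ᶠ n : ℕ in atTop,
      K - A * B * Real.log n + A * x n * (Real.log n - C + e n) ≤ D * Real.log (x n)) :
    Tendsto x atTop (𝓝 B) := by
  have hlog_n : Tendsto (fun n : ℕ => Real.log n) atTop atTop :=
    Real.tendsto_log_atTop.comp tendsto_natCast_atTop_atTop
  refine tendsto_of_ge_of_mul_sub_le (M := A * (C + 1) + D) (K := K) hA hlog_n hxB ?_
  filter_upwards [hx, hlog, he.eventually (Ioi_mem_nhds neg_one_lt_zero)]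
    with n hxn hn hen
  have hlogx : D * Real.log (x n) ≤ D * x n :=
    mul_le_mul_of_nonneg_left ((Real.log_le_sub_one_of_pos hxn).trans (by linarith)) hD
  have he1 : A * x n * (Real.log n - C - 1) ≤ A * x n * (Real.log n - C + e n) :=
    mul_le_mul_of_nonneg_left (by linarith) (by positivity)
  nlinarith

lemma Real.log_le_of_mul_rpow_mul_exp_le {c r n s y T : ℝ} (hc : 0 < c) (hr : 0 < r) (hn : 0 < n)
    (h : c * (r / n) ^ s * Real.exp y ≤ T) :
    Real.log c + s * Real.log r - s * Real.log n + y ≤ Real.log T := by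
  have hpos : 0 < c * (r / n) ^ s * Real.exp y := by positivity
  have := Real.log_le_log hpos h
  rwa [Real.log_mul (by positivity) (Real.exp_ne_zero _), Real.log_mul hc.ne' (by positivity),
    Real.log_exp, Real.log_rpow (div_pos hr hn), Real.log_div hr.ne' hn.ne', mul_sub,
    ← add_sub_assoc] at this

lemma Real.rpow_div_sub_one_pow {t : ℝ} {N : ℕ} (ht : 0 ≤ t) (hN : 1 < N) :
    (t ^ ((N : ℝ) / ((N : ℝ) - 1))) ^ (N - 1) = t ^ N := by
  have hN' : (N : ℝ) - 1 ≠ 0 := sub_ne_zero.mpr (by exact_mod_cast hN.ne')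
  rw [← Real.rpow_natCast _ (N - 1), Nat.cast_sub hN.le, Nat.cast_one, ← Real.rpow_mul ht,
    div_mul_cancel₀ _ hN', Real.rpow_natCast]

lemma bddAbove_range_of_bddAbove_range_pow {ι : Type*} {t : ι → ℝ} {k : ℕ} (hk : k ≠ 0)
    (h : BddAbove (Set.range fun i => t i ^ k)) : BddAbove (Set.range t) := by
  obtain ⟨M, hM⟩ := h
  refine ⟨max M 1, ?_⟩
  rintro _ ⟨i, rfl⟩
  rcases le_or_gt (t i) 1 with h1 | h1
  · exact h1.trans (le_max_right _ _)
  · exact (le_self_pow₀ h1.le hk).trans ((hM ⟨i, rfl⟩).trans (le_max_left _ _))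

theorem stmt16_general (N : ℕ) (hN : 2 ≤ N) (β r m α₀ c₀ ω : ℝ)
    (hr : 0 < r)
    (hα₀ : 0 < α₀) (hc₀ : 0 < c₀) (hω : 0 < ω)
    (t : ℕ → ℝ) (ht : ∀ n, 0 < t n)
    (e : ℕ → ℝ) (he : Tendsto e atTop (nhds 0))
    (hlow : ∀ n : ℕ, 2 ≤ n →
      c₀ * (r / n) ^ ((N : ℝ) - β) *
          Real.exp (α₀ * ω ^ (-(1 : ℝ) / ((N : ℝ) - 1)) * (t n) ^ ((N : ℝ) / ((N : ℝ) - 1)) *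
            (Real.log n - m * (Nat.factorial (N - 2) : ℝ) / (N : ℝ) ^ N * r ^ N + e n))
        ≤ (t n) ^ N)
    (hgg : ∀ n, (((N : ℝ) - β) / N * ((N : ℝ) * ω ^ ((1 : ℝ) / ((N : ℝ) - 1)) / α₀)) ^ (N - 1)
        ≤ (t n) ^ N) :
    BddAbove (Set.range t) ∧
      Tendsto (fun n => (t n) ^ N) atTop
        (nhds ((((N : ℝ) - β) / N * ((N : ℝ) * ω ^ ((1 : ℝ) / ((N : ℝ) - 1)) / α₀)) ^ (N - 1))) := by
  set A := α₀ * ω ^ (-(1 : ℝ) / ((N : ℝ) - 1))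
  set B := ((N : ℝ) - β) / N * ((N : ℝ) * ω ^ ((1 : ℝ) / ((N : ℝ) - 1)) / α₀)
  set x := fun n => t n ^ ((N : ℝ) / ((N : ℝ) - 1))
  have hAB : A * B = N - β := by
    simp only [A, B, neg_div, Real.rpow_neg hω.le]
    field_simp
  have hxpow (n : ℕ) : x n ^ (N - 1) = t n ^ N := Real.rpow_div_sub_one_pow (ht n).le hN
  have hxB (n : ℕ) : B ≤ x n :=
    le_of_pow_le_pow_left₀ (by omega) (Real.rpow_nonneg (ht n).le _) ((hxpow n).symm ▸ hgg n)
  have hlog : ∀ᶠ n : ℕ in atTop,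
      Real.log c₀ + ((N : ℝ) - β) * Real.log r - A * B * Real.log n +
        A * x n * (Real.log n - m * (N - 2).factorial / (N : ℝ) ^ N * r ^ N + e n)
        ≤ ((N : ℝ) - 1) * Real.log (x n) := by
    filter_upwards [eventually_ge_atTop 2] with n hn
    have hlogpow := congrArg Real.log (hxpow n)
    rw [Real.log_pow, Nat.cast_sub (by omega), Nat.cast_one] at hlogpow
    rw [hAB, hlogpow]
    exact Real.log_le_of_mul_rpow_mul_exp_le hc₀ hr (by positivity) (hlow n hn)
  have hN1 : (0 : ℝ) ≤ N - 1 := sub_nonneg.mpr (by exact_mod_cast (by omega : 1 ≤ N))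
  have hx : Tendsto x atTop (𝓝 B) :=
    tendsto_of_ge_of_mul_log_le (by positivity) hN1 he
      (.of_forall fun n => Real.rpow_pos_of_pos (ht n) _) (.of_forall hxB) hlog
  have htN : Tendsto (fun n => t n ^ N) atTop (𝓝 (B ^ (N - 1))) := (hx.pow _).congr hxpow
  exact ⟨bddAbove_range_of_bddAbove_range_pow (by omega) htN.bddAbove_range, htN⟩

theorem stmt16 (N : ℕ) (hN : 2 ≤ N) (β r m β₀ α₀ c₀ ω : ℝ)
    (hβ0 : 0 ≤ β) (hβN : β < N) (hr : 0 < r) (hm : 0 < m) (hβ₀pos : 0 < β₀)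
    (hα₀ : 0 < α₀) (hc₀ : 0 < c₀) (hω : 0 < ω)
    (hβ₀ : ((N : ℝ) - β) ^ N / (α₀ ^ (N - 1) * r ^ ((N : ℝ) - β)) *
        Real.exp (((N : ℝ) - β) * m * (Nat.factorial (N - 2) : ℝ) / (N : ℝ) ^ N * r ^ N)
        < β₀)
    (t : ℕ → ℝ) (ht : ∀ n, 0 < t n)
    (e : ℕ → ℝ) (he : Tendsto e atTop (nhds 0))
    (hlow : ∀ n : ℕ, 2 ≤ n →
      c₀ * (r / n) ^ ((N : ℝ) - β) *
          Real.exp (α₀ * ω ^ (-(1 : ℝ) / ((N : ℝ) - 1)) * (t n) ^ ((N : ℝ) / ((N : ℝ) - 1)) *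
            (Real.log n - m * (Nat.factorial (N - 2) : ℝ) / (N : ℝ) ^ N * r ^ N + e n))
        ≤ (t n) ^ N)
    (hgg : ∀ n, (((N : ℝ) - β) / N * ((N : ℝ) * ω ^ ((1 : ℝ) / ((N : ℝ) - 1)) / α₀)) ^ (N - 1)
        ≤ (t n) ^ N) :
    BddAbove (Set.range t) ∧
      Tendsto (fun n => (t n) ^ N) atTop
        (nhds ((((N : ℝ) - β) / N * ((N : ℝ) * ω ^ ((1 : ℝ) / ((N : ℝ) - 1)) / α₀)) ^ (N - 1))) :=
  stmt16_general N hN β r m α₀ c₀ ω hr hα₀ hc₀ hω t ht e he hlow hgg
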